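/- Let n ≥ 2, let λ be a Borel probability measure on ℝ^n, and let (λ_i)_{i∈I} be a pure decomposition of λ. If C is a connected subgroup of GL(n,ℝ) such that g_*λ = λ for every g ∈ C, then g_*λ_i = λ_i for every g ∈ C and every i ∈ I. -/

import Mathlib

open MeasureTheory Matrix

/-- The (topological) support of a measure: points all of whose open neighbourhoods
have positive measure. -/
def msupp {X : Type*} [TopologicalSpace X] [MeasurableSpace X] (μ : Measure X) : Set X :=
  {x | ∀ U : Set X, IsOpen U → x ∈ U → 0 < μ U}

/-- A nonzero finite Borel measure on `ℝ^d` is *pure* if every vector subspace of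
positive measure contains the linear span of its support. -/
def IsPure {d : ℕ} (μ : Measure (Fin d → ℝ)) : Prop :=
  μ ≠ 0 ∧ IsFiniteMeasure μ ∧
    ∀ W : Submodule ℝ (Fin d → ℝ), 0 < μ (W : Set (Fin d → ℝ)) →
      Submodule.span ℝ (msupp μ) ≤ W

/-- A *pure decomposition* of a finite Borel measure `μ` on `ℝ^d`. -/
def IsPureDecomp {d : ℕ} {ι : Type*} (μ : Measure (Fin d → ℝ))
    (f : ι → Measure (Fin d → ℝ)) : Prop :=
  Countable ι ∧ (∀ i, IsPure (f i)) ∧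
    (∀ i j : ι, i ≠ j →
      Submodule.span ℝ (msupp (f i)) ≠ Submodule.span ℝ (msupp (f j))) ∧
    μ = Measure.sum f

/-!
A pure decomposition is unique: if `V` is the span of the support of a component, then restricting
`λ` to the points of `V` outside the countably many spans of other components not containing `V`
recovers exactly that component. Linear automorphisms carry pure decompositions to pure
decompositions, so for `g ∈ C` the invariance `g_*λ = λ` forces `g_*λ_i` to be some `λ_j`.
Integrating a bounded continuous function against `g_*λ_i` then gives a continuous function of
`g ∈ C` with countable image, which is constant on the connected set `C`; hence `g_*λ_i = λ_i`.
-/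

open Set Topology

section Support

variable {X Y : Type*} [TopologicalSpace X] [MeasurableSpace X]
  [TopologicalSpace Y] [MeasurableSpace Y]

lemma msupp_eq_support (μ : Measure X) : msupp μ = μ.support := by
  ext x
  simp only [msupp, Measure.support_eq_forall_isOpen, mem_ofPred_eq]
  exact forall_congr' fun U => Imp.swap

lemma Homeomorph.support_map [BorelSpace X] [BorelSpace Y] (e : X ≃ₜ Y) (μ : Measure X) :
    (μ.map e).support = e '' μ.support := by
  ext y
  have hbasis : (𝓝 (e.symm y)).HasBasis (· ∈ 𝓝 y) (e ⁻¹' ·) :=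
    e.comap_nhds_eq y ▸ (𝓝 y).basis_sets.comap e
  rw [e.image_eq_preimage_symm, mem_preimage, Measure.mem_support_iff_forall,
    hbasis.mem_measureSupport]
  simp only [← e.toMeasurableEquiv_coe, MeasurableEquiv.map_apply]

end Support

variable {d : ℕ}

noncomputable def supportSpan (μ : Measure (Fin d → ℝ)) : Submodule ℝ (Fin d → ℝ) :=
  Submodule.span ℝ (msupp μ)

lemma measure_compl_supportSpan (μ : Measure (Fin d → ℝ)) :
    μ (supportSpan μ : Set (Fin d → ℝ))ᶜ = 0 := by
  refine measure_mono_null (compl_subset_compl.2 ?_) Measure.measure_compl_support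
  rw [← msupp_eq_support]
  exact Submodule.subset_span

lemma supportSpan_map (e : (Fin d → ℝ) ≃L[ℝ] (Fin d → ℝ)) (μ : Measure (Fin d → ℝ)) :
    supportSpan (μ.map e) = (supportSpan μ).map (e : (Fin d → ℝ) →ₗ[ℝ] (Fin d → ℝ)) := by
  rw [supportSpan, supportSpan, msupp_eq_support, msupp_eq_support, Submodule.map_span]
  exact congrArg (Submodule.span ℝ) (e.toHomeomorph.support_map μ)

/-- A pure measure with span `V` is concentrated on `genericPart 𝒰 V`, and a pure measure whose
span is any other member of `𝒰` vanishes on it. -/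
def genericPart (𝒰 : Set (Submodule ℝ (Fin d → ℝ))) (V : Submodule ℝ (Fin d → ℝ)) :
    Set (Fin d → ℝ) :=
  (V : Set (Fin d → ℝ)) \ ⋃ U ∈ {U ∈ 𝒰 | ¬ V ≤ U}, (U : Set (Fin d → ℝ))

lemma measurableSet_genericPart {𝒰 : Set (Submodule ℝ (Fin d → ℝ))} (h𝒰 : 𝒰.Countable)
    (V : Submodule ℝ (Fin d → ℝ)) : MeasurableSet (genericPart 𝒰 V) :=
  (Submodule.closed_of_finiteDimensional V).measurableSet.diff <|
    .biUnion (h𝒰.mono (sep_subset _ _))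
      fun U _ => (Submodule.closed_of_finiteDimensional U).measurableSet

namespace IsPure

variable {μ : Measure (Fin d → ℝ)} {𝒰 : Set (Submodule ℝ (Fin d → ℝ))}

lemma supportSpan_le_of_measure_ne_zero (hμ : IsPure μ) {W : Submodule ℝ (Fin d → ℝ)}
    (hW : μ W ≠ 0) : supportSpan μ ≤ W :=
  hμ.2.2 W (pos_iff_ne_zero.2 hW)

lemma map (hμ : IsPure μ) (e : (Fin d → ℝ) ≃L[ℝ] (Fin d → ℝ)) : IsPure (μ.map e) := by
  obtain ⟨hne, hfin, hle⟩ := hμ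
  refine ⟨?_, Measure.isFiniteMeasure_map μ e, fun W hW => ?_⟩
  · rwa [Ne, Measure.map_eq_zero_iff e.continuous.aemeasurable]
  · rw [Measure.map_apply e.continuous.measurable
      (Submodule.closed_of_finiteDimensional W).measurableSet] at hW
    rw [← supportSpan, supportSpan_map, Submodule.map_le_iff_le_comap]
    exact hle _ hW

lemma restrict_genericPart (hμ : IsPure μ) (h𝒰 : 𝒰.Countable) :
    μ.restrict (genericPart 𝒰 (supportSpan μ)) = μ := by
  refine Measure.restrict_eq_self_of_ae_mem <| mem_ae_iff.2 ?_
  rw [ofPred_mem_eq, genericPart, compl_sdiff]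
  refine measure_union_null ((measure_biUnion_null_iff (h𝒰.mono (sep_subset _ _))).2
    fun U hU => ?_) (measure_compl_supportSpan μ)
  by_contra h
  exact hU.2 (hμ.supportSpan_le_of_measure_ne_zero h)

lemma supportSpan_eq_of_measure_genericPart_ne_zero (hμ : IsPure μ)
    (hmem : supportSpan μ ∈ 𝒰) {V : Submodule ℝ (Fin d → ℝ)}
    (h : μ (genericPart 𝒰 V) ≠ 0) : supportSpan μ = V := by
  have hle : supportSpan μ ≤ V :=
    hμ.supportSpan_le_of_measure_ne_zero fun h0 => h (measure_mono_null sdiff_subset h0)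
  refine le_antisymm hle (not_not.1 fun hV => h ?_)
  have hdisj : genericPart 𝒰 V ⊆ (supportSpan μ : Set (Fin d → ℝ))ᶜ :=
    fun x hx hxμ => hx.2 (mem_biUnion ⟨hmem, hV⟩ hxμ)
  exact measure_mono_null hdisj (measure_compl_supportSpan μ)

end IsPure

namespace IsPureDecomp

variable {ι κ : Type*} {μ : Measure (Fin d → ℝ)} {f : ι → Measure (Fin d → ℝ)}

lemma supportSpan_injective (hf : IsPureDecomp μ f) :
    Function.Injective fun i => supportSpan (f i) :=
  fun i j h => not_not.1 fun hij => hf.2.2.1 i j hij h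

lemma restrict_genericPart (hf : IsPureDecomp μ f) {𝒰 : Set (Submodule ℝ (Fin d → ℝ))}
    (h𝒰 : 𝒰.Countable) (hmem : ∀ j, supportSpan (f j) ∈ 𝒰) (i : ι) :
    μ.restrict (genericPart 𝒰 (supportSpan (f i))) = f i := by
  have hT := measurableSet_genericPart h𝒰 (supportSpan (f i))
  have hothers : ∀ j ≠ i, (f j).restrict (genericPart 𝒰 (supportSpan (f i))) = 0 :=
    fun j hj => Measure.restrict_eq_zero.2 <| not_not.1 fun h =>
      hj (hf.supportSpan_injective ((hf.2.1 j).supportSpan_eq_of_measure_genericPart_ne_zero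
        (hmem j) h))
  ext s hs
  rw [hf.2.2.2, Measure.restrict_sum _ hT, Measure.sum_apply _ hs,
    tsum_eq_single i fun j hj => by rw [hothers j hj, Measure.coe_zero, Pi.zero_apply],
    (hf.2.1 i).restrict_genericPart h𝒰]

theorem exists_eq {g : κ → Measure (Fin d → ℝ)} (hf : IsPureDecomp μ f)
    (hg : IsPureDecomp μ g) (i : ι) : ∃ j, g j = f i := by
  have : Countable ι := hf.1
  have : Countable κ := hg.1
  set 𝒰 := (range fun i => supportSpan (f i)) ∪ range fun j => supportSpan (g j)
  have h𝒰 : 𝒰.Countable := (countable_range _).union (countable_range _)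
  have hfi := hf.restrict_genericPart h𝒰 (fun j => .inl (mem_range_self j)) i
  have hgi := hg.restrict_genericPart h𝒰 (fun j => .inr (mem_range_self j))
  obtain ⟨j, hj⟩ : ∃ j, g j (genericPart 𝒰 (supportSpan (f i))) ≠ 0 := by
    by_contra! h
    apply (hf.2.1 i).1
    rw [← hfi, Measure.restrict_eq_zero, hg.2.2.2,
      Measure.sum_apply _ (measurableSet_genericPart h𝒰 _)]
    simp [h]
  refine ⟨j, ?_⟩
  rw [← hfi, ← hgi j, (hg.2.1 j).supportSpan_eq_of_measure_genericPart_ne_zero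
    (.inr (mem_range_self j)) hj]

lemma map (hf : IsPureDecomp μ f) (e : (Fin d → ℝ) ≃L[ℝ] (Fin d → ℝ)) :
    IsPureDecomp (μ.map e) fun i => (f i).map e := by
  obtain ⟨hcount, hpure, hdist, rfl⟩ := hf
  refine ⟨hcount, fun i => (hpure i).map e, fun i j hij h => hdist i j hij ?_,
    Measure.map_sum e.continuous.aemeasurable⟩
  rw [← supportSpan, ← supportSpan, supportSpan_map, supportSpan_map] at h
  exact Submodule.map_injective_of_injective e.injective h

theorem exists_eq_map_of_map_eq (hf : IsPureDecomp μ f) (e : (Fin d → ℝ) ≃L[ℝ] (Fin d → ℝ))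
    (he : μ.map e = μ) (i : ι) : ∃ j, f j = (f i).map e :=
  (he ▸ hf.map e).exists_eq hf i

end IsPureDecomp

instance Matrix.firstCountableTopology {m n α : Type*} [Countable m] [Countable n]
    [TopologicalSpace α] [FirstCountableTopology α] : FirstCountableTopology (Matrix m n α) :=
  inferInstanceAs (FirstCountableTopology (m → n → α))

instance MulOpposite.firstCountableTopology {α : Type*} [TopologicalSpace α]
    [FirstCountableTopology α] : FirstCountableTopology αᵐᵒᵖ :=
  MulOpposite.opHomeomorph.symm.isEmbedding.firstCountableTopology

instance Units.firstCountableTopology {M : Type*} [Monoid M] [TopologicalSpace M]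
    [FirstCountableTopology M] : FirstCountableTopology Mˣ :=
  Units.isEmbedding_embedProduct.firstCountableTopology

section Parametric

variable {X E F : Type*} [TopologicalSpace X] [FirstCountableTopology X]
  [TopologicalSpace E] [MeasurableSpace E] [OpensMeasurableSpace E]

lemma continuous_integral_of_bounded {G : Type*} [NormedAddCommGroup G] [NormedSpace ℝ G]
    [SecondCountableTopologyEither E G] {μ : Measure E} [IsFiniteMeasure μ] {B : X → E → G}
    (hB : Continuous (Function.uncurry B)) {K : ℝ} (hK : ∀ x v, ‖B x v‖ ≤ K) :
    Continuous fun x => ∫ v, B x v ∂μ :=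
  continuous_of_dominated (fun x => (hB.comp (Continuous.prodMk_right x)).aestronglyMeasurable)
    (fun x => .of_forall (hK x)) (integrable_const K)
    (.of_forall fun v => hB.comp (Continuous.prodMk_left v))

/-- Against a bounded continuous test function the pushforwards give a continuous real function
on `S` with countable image, hence a constant one. -/
theorem IsPreconnected.map_eq_map_of_countable [TopologicalSpace F] [MeasurableSpace F]
    [BorelSpace F] [HasOuterApproxClosed F] {S : Set X} (hS : IsPreconnected S)
    {A : X → E → F} (hA : Continuous (Function.uncurry A)) (μ : Measure E) [IsFiniteMeasure μ]
    {M : Set (Measure F)} (hM : M.Countable) (hmaps : ∀ x ∈ S, μ.map (A x) ∈ M)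
    {x y : X} (hx : x ∈ S) (hy : y ∈ S) : μ.map (A x) = μ.map (A y) := by
  refine ext_of_forall_integral_eq_of_IsFiniteMeasure fun φ => ?_
  set I : X → ℝ := fun x => ∫ v, φ (A x v) ∂μ
  have hI : ∀ x, ∫ w, φ w ∂(μ.map (A x)) = I x := fun x =>
    integral_map (hA.comp (Continuous.prodMk_right x)).aemeasurable
      φ.continuous.aestronglyMeasurable
  have hIcont : Continuous I :=
    continuous_integral_of_bounded (φ.continuous.comp hA) fun _ _ => φ.norm_coe_le_norm _
  have hIcount : (I '' S).Countable := by
    refine (hM.image fun ν => ∫ w, φ w ∂ν).mono ?_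
    rintro _ ⟨x, hx, rfl⟩
    exact ⟨_, hmaps x hx, hI x⟩
  rw [hI, hI]
  exact hIcount.isTotallyDisconnected _ Subset.rfl (hS.image I hIcont.continuousOn)
    (mem_image_of_mem I hx) (mem_image_of_mem I hy)

end Parametric

theorem stmt4_general (n : ℕ)
    (lam : Measure (Fin n → ℝ))
    (ι : Type) (f : ι → Measure (Fin n → ℝ)) (hdec : IsPureDecomp lam f)
    (C : Subgroup (GL (Fin n) ℝ))
    (hCconn : IsConnected (C : Set (GL (Fin n) ℝ)))
    (hinv : ∀ g ∈ C,
      lam.map (fun v => Matrix.mulVec (g : Matrix (Fin n) (Fin n) ℝ) v) = lam) :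
    ∀ g ∈ C, ∀ i : ι,
      (f i).map (fun v => Matrix.mulVec (g : Matrix (Fin n) (Fin n) ℝ) v) = f i := by
  intro g hg i
  have : Countable ι := hdec.1
  have : IsFiniteMeasure (f i) := (hdec.2.1 i).2.1
  have hA : Continuous (Function.uncurry fun (c : GL (Fin n) ℝ) (v : Fin n → ℝ) =>
      (c : Matrix (Fin n) (Fin n) ℝ) *ᵥ v) :=
    (Units.continuous_val.comp continuous_fst).matrix_mulVec continuous_snd
  have horbit : ∀ c ∈ C, (f i).map (fun v => (c : Matrix (Fin n) (Fin n) ℝ) *ᵥ v) ∈ range f :=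
    fun c hc => hdec.exists_eq_map_of_map_eq
      (Matrix.GeneralLinearGroup.toLin c).toLinearEquiv.toContinuousLinearEquiv (hinv c hc) i
  simpa using hCconn.isPreconnected.map_eq_map_of_countable hA (f i) (countable_range f)
    horbit hg C.one_mem

/-- If a Borel probability measure `lam` on `ℝ^n` (`n ≥ 2`) is invariant
under a connected subgroup `C` of `GL(n,ℝ)`, then each component of any pure
decomposition of `lam` is `C`-invariant. -/
theorem stmt4 (n : ℕ) (hn : 2 ≤ n)
    (lam : Measure (Fin n → ℝ)) [IsProbabilityMeasure lam]
    (ι : Type) (f : ι → Measure (Fin n → ℝ)) (hdec : IsPureDecomp lam f)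
    (C : Subgroup (GL (Fin n) ℝ))
    (hCconn : IsConnected (C : Set (GL (Fin n) ℝ)))
    (hinv : ∀ g ∈ C,
      lam.map (fun v => Matrix.mulVec (g : Matrix (Fin n) (Fin n) ℝ) v) = lam) :
    ∀ g ∈ C, ∀ i : ι,
      (f i).map (fun v => Matrix.mulVec (g : Matrix (Fin n) (Fin n) ℝ) v) = f i :=
  stmt4_general n lam ι f hdec C hCconn hinv
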